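/- Let H_k ∈ ℂ^{N_k×N_t}, let W_1,…,W_K and W̄_1,…,W̄_K be matrices in ℂ^{N_t×N_k}, let v ∈ ℂ^{N_t}, and let σ_k² > 0. Define the achievable rate R_{L,k}(W_1,…,W_K) = ln det(I + H_k W_k W_kᴴ H_kᴴ (Σ_{u≠k} H_k W_u W_uᴴ H_kᴴ + H_k v vᴴ H_kᴴ + σ_k² I)⁻¹). Define F_k = Σ_{u≠k} H_k W̄_u W̄_uᴴ H_kᴴ + H_k v vᴴ H_kᴴ + σ_k² I and A_k = (F_k + H_k W̄_k W̄_kᴴ H_kᴴ)⁻¹ H_k W̄_k W̄_kᴴ H_kᴴ F_k⁻¹. Then R_{L,k}(W_1,…,W_K) ≥ ln det(I + W̄_kᴴ H_kᴴ F_k⁻¹ H_k W̄_k) − Tr(W̄_kᴴ H_kᴴ F_k⁻¹ H_k W̄_k) + 2 Re(Tr(W̄_kᴴ H_kᴴ F_k⁻¹ H_k W_k)) − Tr(Σ_{u=1}^K W_uᴴ H_kᴴ A_k H_k W_u) − Tr(A_k (H_k v vᴴ H_kᴴ + σ_k² I)). -/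

import Mathlib

/-!
Write `Y = H W_k`, `G` for the interference-plus-noise covariance and `T = G + Y Yᴴ`. By the
Woodbury identity the MMSE matrix `E = I - Yᴴ T⁻¹ Y` equals `(I + Yᴴ G⁻¹ Y)⁻¹`, so the rate is
`-ln det E`. For every receive filter `U` the MSE matrix of `U` exceeds `E` by
`(U - T⁻¹ Y)ᴴ T (U - T⁻¹ Y) ≥ 0`, and for every weight `D > 0` the eigenvalue inequality
`ln det (D E) ≤ Tr (D E) - N` (from `ln x ≤ x - 1`) gives
`-ln det E ≥ ln det D - Tr (D MSE(U)) + N`. Taking the MMSE weight and receiver of the reference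
precoders, `D = I + W̄_kᴴ Hᴴ F⁻¹ H W̄_k` and `U = (F + H W̄_k W̄_kᴴ Hᴴ)⁻¹ H W̄_k`, one gets
`D Uᴴ = W̄_kᴴ Hᴴ F⁻¹` and `U D Uᴴ = A`, which turns the right-hand side into the stated bound.
-/

open Matrix ComplexOrder

open scoped MatrixOrder

namespace Matrix

section Algebraic

variable {α : Type*} [CommRing α] {m n : Type*} [Fintype m] [Fintype n] [DecidableEq m]
  [DecidableEq n]

theorem inv_one_add_mul_inv_mul {G : Matrix m m α} (X : Matrix n m α) (Y : Matrix m n α)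
    (hG : IsUnit G) (hT : IsUnit (G + Y * X)) :
    (1 + X * G⁻¹ * Y)⁻¹ = 1 - X * (G + Y * X)⁻¹ * Y := by
  have hGG : G⁻¹⁻¹ = G := nonsing_inv_nonsing_inv G ((isUnit_iff_isUnit_det G).1 hG)
  rw [add_mul_mul_inv_eq_sub 1 X G⁻¹ Y isUnit_one (isUnit_nonsing_inv_iff.2 hG) (by simpa [hGG])]
  simp [hGG]

theorem one_add_mul_inv_mul_mul {F : Matrix m m α} (X : Matrix n m α) (Y : Matrix m n α)
    (hF : IsUnit F) : (1 + X * F⁻¹ * Y) * X = X * F⁻¹ * (F + Y * X) := by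
  rw [Matrix.mul_add, Matrix.mul_assoc X F⁻¹ F, nonsing_inv_mul F ((isUnit_iff_isUnit_det F).1 hF),
    Matrix.add_mul, Matrix.one_mul, Matrix.mul_one, Matrix.mul_assoc _ Y]

end Algebraic

theorem trace_mul_sum_mul_add {α : Type*} [CommSemiring α] {ι m n : Type*} [Fintype m]
    [Fintype n] (s : Finset ι) (A R : Matrix m m α) (Y : ι → Matrix m n α)
    (B : ι → Matrix n m α) :
    (A * (∑ i ∈ s, Y i * B i + R)).trace = (∑ i ∈ s, B i * A * Y i).trace + (A * R).trace := by
  rw [Matrix.mul_add, trace_add, Finset.mul_sum, trace_sum, trace_sum]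
  congr 1
  refine Finset.sum_congr rfl fun i _ => ?_
  rw [← Matrix.mul_assoc, trace_mul_comm, Matrix.mul_assoc]

section Positivity

open RCLike

variable {𝕜 : Type*} [RCLike 𝕜] {n : Type*} [Fintype n]

theorem PosSemidef.trace_mul_nonneg {P Q : Matrix n n 𝕜} (hP : P.PosSemidef)
    (hQ : Q.PosSemidef) : 0 ≤ (P * Q).trace := by
  classical
  have hs : (CFC.sqrt P).IsHermitian := (CFC.sqrt_nonneg P).posSemidef.isHermitian
  have hsQs := hQ.conjTranspose_mul_mul_same (CFC.sqrt P)
  rw [hs.eq] at hsQs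
  rw [← CFC.sqrt_mul_sqrt_self P hP.nonneg, Matrix.mul_assoc, trace_mul_comm]
  exact hsQs.trace_nonneg

theorem PosSemidef.trace_mul_le_trace_mul {D X Y : Matrix n n 𝕜} (hD : D.PosSemidef)
    (hXY : (Y - X).PosSemidef) : (D * X).trace ≤ (D * Y).trace := by
  simpa [Matrix.mul_sub, trace_sub] using hD.trace_mul_nonneg hXY

variable [DecidableEq n]

theorem PosDef.im_det_eq_zero {M : Matrix n n 𝕜} (hM : M.PosDef) : im M.det = 0 :=
  (RCLike.pos_iff.mp hM.det_pos).2

theorem PosDef.re_det_pos {M : Matrix n n 𝕜} (hM : M.PosDef) : 0 < re M.det :=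
  (RCLike.pos_iff.mp hM.det_pos).1

theorem PosDef.log_re_det_mul {A B : Matrix n n 𝕜} (hA : A.PosDef) (hB : B.PosDef) :
    Real.log (re (A * B).det) = Real.log (re A.det) + Real.log (re B.det) := by
  rw [det_mul, RCLike.mul_re, hA.im_det_eq_zero, zero_mul, sub_zero,
    Real.log_mul hA.re_det_pos.ne' hB.re_det_pos.ne']

theorem PosDef.log_re_det_inv {M : Matrix n n 𝕜} (hM : M.PosDef) :
    Real.log (re M⁻¹.det) = -Real.log (re M.det) := by
  have h := hM.log_re_det_mul hM.inv
  rw [mul_nonsing_inv M (isUnit_iff_isUnit_det M |>.1 hM.isUnit)] at h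
  simp only [det_one, one_re, Real.log_one] at h
  linarith

theorem PosDef.log_re_det_le_re_trace_sub_card {M : Matrix n n 𝕜} (hM : M.PosDef) :
    Real.log (re M.det) ≤ re M.trace - Fintype.card n := by
  have hpos := hM.eigenvalues_pos
  have hdet : re M.det = ∏ i, hM.isHermitian.eigenvalues i := by
    rw [hM.isHermitian.det_eq_prod_eigenvalues, ← RCLike.ofReal_prod, RCLike.ofReal_re]
  have htr : re M.trace = ∑ i, hM.isHermitian.eigenvalues i := by
    simp [hM.isHermitian.trace_eq_sum_eigenvalues]
  rw [hdet, htr, Real.log_prod fun i _ => (hpos i).ne']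
  calc ∑ i, Real.log (hM.isHermitian.eigenvalues i)
      ≤ ∑ i, (hM.isHermitian.eigenvalues i - 1) :=
        Finset.sum_le_sum fun i _ => Real.log_le_sub_one_of_pos (hpos i)
    _ = _ := by simp [Finset.sum_sub_distrib]

theorem PosDef.log_re_det_add_log_re_det_le {D E : Matrix n n 𝕜} (hD : D.PosDef)
    (hE : E.PosDef) :
    Real.log (re D.det) + Real.log (re E.det) ≤ re (D * E).trace - Fintype.card n := by
  set s := CFC.sqrt D
  have hss : s * s = D := CFC.sqrt_mul_sqrt_self D hD.posSemidef.nonneg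
  have hs : s.IsHermitian := (CFC.sqrt_nonneg D).posSemidef.isHermitian
  have hsu : IsUnit s := isUnit_of_mul_isUnit_left (hss ▸ hD.isUnit)
  have hsEs : (s * E * s).PosDef := by
    simpa [hs.eq] using hE.conjTranspose_mul_mul_same (mulVec_injective_of_isUnit hsu)
  have hdet : (s * E * s).det = (D * E).det := by
    rw [← hss, det_mul, det_mul, det_mul, det_mul]
    ring
  have htr : (s * E * s).trace = (D * E).trace := by
    rw [trace_mul_cycle, hss]
  have h := hsEs.log_re_det_le_re_trace_sub_card
  rwa [hdet, htr, hD.log_re_det_mul hE] at h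

end Positivity

/-- The error covariance `𝔼[(Uᴴ r - s)(Uᴴ r - s)ᴴ]` of the linear receiver `U` for the signal
`r = Y s + z` with `𝔼[s sᴴ] = 1`, `𝔼[r rᴴ] = T` and `s`, `z` uncorrelated. -/
def mseMatrix {α : Type*} [Ring α] [StarRing α] {m n : Type*} [Fintype m] [DecidableEq n]
    (T : Matrix m m α) (Y U : Matrix m n α) : Matrix n n α :=
  1 - Uᴴ * Y - Yᴴ * U + Uᴴ * T * U

theorem mseMatrix_eq_add {α : Type*} [CommRing α] [StarRing α] {m n : Type*} [Fintype m]
    [DecidableEq m] [DecidableEq n] {T : Matrix m m α} (hT : T.IsHermitian) (hTu : IsUnit T)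
    (Y U : Matrix m n α) :
    mseMatrix T Y U = 1 - Yᴴ * T⁻¹ * Y + (U - T⁻¹ * Y)ᴴ * T * (U - T⁻¹ * Y) := by
  have hdet := (isUnit_iff_isUnit_det T).1 hTu
  rw [mseMatrix, conjTranspose_sub, conjTranspose_mul, hT.inv.eq]
  simp only [Matrix.sub_mul, Matrix.mul_sub, Matrix.mul_assoc,
    mul_nonsing_inv_cancel_left _ _ hdet, nonsing_inv_mul_cancel_left _ _ hdet]
  abel

section WeightedMSE

open RCLike

variable {𝕜 : Type*} [RCLike 𝕜] {m n : Type*} [Fintype m] [Fintype n] [DecidableEq n]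

theorem IsHermitian.re_trace_mul_mseMatrix {D : Matrix n n 𝕜} (hD : D.IsHermitian)
    (T : Matrix m m 𝕜) (Y U : Matrix m n 𝕜) :
    re (D * mseMatrix T Y U).trace
      = re D.trace - 2 * re (D * Uᴴ * Y).trace + re (U * D * Uᴴ * T).trace := by
  have hcross : (D * (Yᴴ * U)).trace = star (D * Uᴴ * Y).trace := by
    rw [← trace_conjTranspose, trace_mul_comm]
    simp only [conjTranspose_mul, conjTranspose_conjTranspose, hD.eq, Matrix.mul_assoc]
  have hquad : (D * (Uᴴ * T * U)).trace = (U * D * Uᴴ * T).trace := by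
    rw [trace_mul_comm, Matrix.mul_assoc, trace_mul_comm]
    simp only [Matrix.mul_assoc]
  rw [mseMatrix, Matrix.mul_add, Matrix.mul_sub, Matrix.mul_sub, Matrix.mul_one, trace_add,
    trace_sub, trace_sub, hcross, hquad, ← Matrix.mul_assoc D]
  simp only [map_add, map_sub, star_def, conj_re]
  ring

variable [DecidableEq m]

theorem log_re_det_sub_re_trace_mul_mseMatrix_le {G : Matrix m m 𝕜} {D : Matrix n n 𝕜}
    (hG : G.PosDef) (hD : D.PosDef) (Y U : Matrix m n 𝕜) :
    Real.log (re D.det) - re (D * mseMatrix (G + Y * Yᴴ) Y U).trace + Fintype.card n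
      ≤ Real.log (re (1 + Yᴴ * G⁻¹ * Y).det) := by
  have hT : (G + Y * Yᴴ).PosDef := hG.add_posSemidef (posSemidef_self_mul_conjTranspose Y)
  have hInfo : (1 + Yᴴ * G⁻¹ * Y).PosDef :=
    PosDef.one.add_posSemidef (hG.inv.posSemidef.conjTranspose_mul_mul_same Y)
  have hmmse : (1 + Yᴴ * G⁻¹ * Y)⁻¹ = 1 - Yᴴ * (G + Y * Yᴴ)⁻¹ * Y :=
    inv_one_add_mul_inv_mul Yᴴ Y hG.isUnit hT.isUnit
  have hlog := hD.log_re_det_add_log_re_det_le hInfo.inv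
  rw [hInfo.log_re_det_inv, hmmse] at hlog
  have hmse : (D * (1 - Yᴴ * (G + Y * Yᴴ)⁻¹ * Y)).trace
      ≤ (D * mseMatrix (G + Y * Yᴴ) Y U).trace := by
    refine hD.posSemidef.trace_mul_le_trace_mul ?_
    rw [mseMatrix_eq_add hT.isHermitian hT.isUnit, add_sub_cancel_left]
    exact hT.posSemidef.conjTranspose_mul_mul_same _
  linarith [(RCLike.le_iff_re_im.mp hmse).1]

theorem log_re_det_one_add_ge_of_reference {G F : Matrix m m 𝕜} (hG : G.PosDef)
    (hF : F.PosDef) (Y Yb : Matrix m n 𝕜) :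
    Real.log (re (1 + Ybᴴ * F⁻¹ * Yb).det) - re (Ybᴴ * F⁻¹ * Yb).trace
        + 2 * re (Ybᴴ * F⁻¹ * Y).trace
        - re ((F + Yb * Ybᴴ)⁻¹ * (Yb * Ybᴴ) * F⁻¹ * (G + Y * Yᴴ)).trace
      ≤ Real.log (re (1 + Yᴴ * G⁻¹ * Y).det) := by
  have hTb : (F + Yb * Ybᴴ).PosDef := hF.add_posSemidef (posSemidef_self_mul_conjTranspose Yb)
  have hD : (1 + Ybᴴ * F⁻¹ * Yb).PosDef :=
    PosDef.one.add_posSemidef (hF.inv.posSemidef.conjTranspose_mul_mul_same Yb)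
  have hUH : ((F + Yb * Ybᴴ)⁻¹ * Yb)ᴴ = Ybᴴ * (F + Yb * Ybᴴ)⁻¹ := by
    rw [conjTranspose_mul, hTb.isHermitian.inv.eq]
  have hDU : (1 + Ybᴴ * F⁻¹ * Yb) * ((F + Yb * Ybᴴ)⁻¹ * Yb)ᴴ = Ybᴴ * F⁻¹ := by
    rw [hUH, ← Matrix.mul_assoc, one_add_mul_inv_mul_mul Ybᴴ Yb hF.isUnit, Matrix.mul_assoc,
      mul_nonsing_inv _ (isUnit_iff_isUnit_det _ |>.1 hTb.isUnit), Matrix.mul_one]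
  have h := log_re_det_sub_re_trace_mul_mseMatrix_le hG hD Y ((F + Yb * Ybᴴ)⁻¹ * Yb)
  rw [hD.isHermitian.re_trace_mul_mseMatrix, hDU, Matrix.mul_assoc ((F + Yb * Ybᴴ)⁻¹ * Yb),
    hDU] at h
  simp only [trace_add, trace_one, map_add, natCast_re, Matrix.mul_assoc] at h ⊢
  linarith

end WeightedMSE

end Matrix

/-- The SCA concave lower bound on the achievable rate of user `k` under
linear precoding: with
`R_{L,k} = ln det(I + H W_k W_kᴴ Hᴴ (Σ_{u≠k} H W_u W_uᴴ Hᴴ + H v vᴴ Hᴴ + σ² I)⁻¹)`,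
`F = Σ_{u≠k} H W̄_u W̄_uᴴ Hᴴ + H v vᴴ Hᴴ + σ² I`, and
`A = (F + H W̄_k W̄_kᴴ Hᴴ)⁻¹ H W̄_k W̄_kᴴ Hᴴ F⁻¹`, we have
`R_{L,k} ≥ ln det(I + W̄_kᴴ Hᴴ F⁻¹ H W̄_k) − Tr(W̄_kᴴ Hᴴ F⁻¹ H W̄_k)
  + 2 Re Tr(W̄_kᴴ Hᴴ F⁻¹ H W_k) − Tr(Σ_u W_uᴴ Hᴴ A H W_u) − Tr(A (H v vᴴ Hᴴ + σ² I))`. -/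
theorem stmt6 {Nt Nk K : ℕ} (k : Fin K)
    (H : Matrix (Fin Nk) (Fin Nt) ℂ)
    (W Wb : Fin K → Matrix (Fin Nt) (Fin Nk) ℂ)
    (v : Fin Nt → ℂ) (σ2 : ℝ) (hσ : 0 < σ2)
    (F A : Matrix (Fin Nk) (Fin Nk) ℂ)
    (hF : F = ∑ u ∈ Finset.univ.erase k, H * Wb u * (Wb u)ᴴ * Hᴴ
            + H * vecMulVec v (star v) * Hᴴ + (σ2 : ℂ) • 1)
    (hA : A = (F + H * Wb k * (Wb k)ᴴ * Hᴴ)⁻¹ * (H * Wb k * (Wb k)ᴴ * Hᴴ) * F⁻¹) :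
    Real.log ((1 + H * W k * (W k)ᴴ * Hᴴ *
        (∑ u ∈ Finset.univ.erase k, H * W u * (W u)ᴴ * Hᴴ
          + H * vecMulVec v (star v) * Hᴴ + (σ2 : ℂ) • 1)⁻¹).det.re)
      ≥ Real.log ((1 + (Wb k)ᴴ * Hᴴ * F⁻¹ * H * Wb k).det.re)
        - (((Wb k)ᴴ * Hᴴ * F⁻¹ * H * Wb k).trace).re
        + 2 * (((Wb k)ᴴ * Hᴴ * F⁻¹ * H * W k).trace).re
        - ((∑ u, (W u)ᴴ * Hᴴ * A * H * W u).trace).re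
        - ((A * (H * vecMulVec v (star v) * Hᴴ + (σ2 : ℂ) • 1)).trace).re := by
  have hgram : ∀ X : Matrix (Fin Nt) (Fin Nk) ℂ, H * X * Xᴴ * Hᴴ = H * X * (H * X)ᴴ := fun X => by
    simp only [conjTranspose_mul, Matrix.mul_assoc]
  have hcov : ∀ X : Fin K → Matrix (Fin Nt) (Fin Nk) ℂ,
      (∑ u ∈ Finset.univ.erase k, H * X u * (X u)ᴴ * Hᴴ
        + H * vecMulVec v (star v) * Hᴴ + (σ2 : ℂ) • 1).PosDef := fun X =>
    PosDef.posSemidef_add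
      ((posSemidef_sum _ fun u _ => hgram (X u) ▸ posSemidef_self_mul_conjTranspose _).add
        ((posSemidef_vecMulVec_self_star v).mul_mul_conjTranspose_same H))
      (PosDef.one.smul (by exact_mod_cast hσ))
  have hA_gram : A = (F + H * Wb k * (H * Wb k)ᴴ)⁻¹ * (H * Wb k * (H * Wb k)ᴴ) * F⁻¹ := by
    rw [hA, ← hgram]
  have htotal : ∑ u ∈ Finset.univ.erase k, H * W u * (W u)ᴴ * Hᴴ + H * vecMulVec v (star v) * Hᴴ
        + (σ2 : ℂ) • 1 + H * W k * (H * W k)ᴴ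
      = ∑ u, H * W u * (H * W u)ᴴ + (H * vecMulVec v (star v) * Hᴴ + (σ2 : ℂ) • 1) := by
    rw [← hgram, ← Finset.sum_erase_add _ _ (Finset.mem_univ k)]
    simp only [hgram]
    abel
  have key := log_re_det_one_add_ge_of_reference (hcov W) (hF ▸ hcov Wb) (H * W k) (H * Wb k)
  rw [← hA_gram, htotal, trace_mul_sum_mul_add] at key
  rw [ge_iff_le, hgram, Matrix.mul_assoc _ (H * W k)ᴴ, det_one_add_mul_comm (H * W k)]
  simp only [RCLike.re_to_complex, Complex.add_re, conjTranspose_mul, Matrix.mul_assoc] at key ⊢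
  linarith
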